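/- Let U : ℝ^d → ℝ be twice continuously differentiable such that at every point the Hessian H = ∇²U satisfies H_{ii} ≥ Σ_{j≠i} |H_{ij}| for all i (diagonal dominance). Then for any x ∈ ℝ^d and any v ∈ {−1, 1}^d and each coordinate i, the function t ↦ ∂_i U(x + t·v)·v_i is non-decreasing, and hence the Zig-Zag rate t ↦ Σ_i (∂_i U(x + t·v)·v_i)_+ is non-decreasing. -/

import Mathlib

/-!
Along the line `t ↦ y = x + t • v`, the derivative of `∂ᵢU(y) vᵢ` is `(∑ⱼ vⱼ Hᵢⱼ) vᵢ` with `H` the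
(symmetric) Hessian at `y`. Since `|vⱼ| = |vᵢ|`, this is at least `vᵢ² (Hᵢᵢ - ∑_{j ≠ i} |Hᵢⱼ|) ≥ 0`.
Taking positive parts and summing preserves monotonicity.
-/

open Finset

theorem sum_mul_mul_nonneg_of_diag_dominant {ι : Type*} [Fintype ι] [DecidableEq ι]
    (H : ι → ι → ℝ) (v : ι → ℝ) (i : ι) (hdom : ∑ j ∈ univ \ {i}, |H i j| ≤ H i i)
    (hv : ∀ j, |v j| ≤ |v i|) :
    0 ≤ (∑ j, v j * H i j) * v i := by
  have off_diag : ∀ j, -(|H i j| * v i ^ 2) ≤ v j * H i j * v i := fun j => by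
    have : |v j * H i j * v i| ≤ |H i j| * v i ^ 2 := by
      rw [abs_mul, abs_mul, ← sq_abs (v i), sq]
      nlinarith [mul_le_mul_of_nonneg_right (hv j)
        (mul_nonneg (abs_nonneg (H i j)) (abs_nonneg (v i)))]
    exact (abs_le.mp this).1
  calc (0 : ℝ) ≤ (H i i - ∑ j ∈ univ \ {i}, |H i j|) * v i ^ 2 :=
        mul_nonneg (sub_nonneg.mpr hdom) (sq_nonneg _)
    _ = v i * H i i * v i + ∑ j ∈ univ \ {i}, -(|H i j| * v i ^ 2) := by
        rw [sum_neg_distrib, ← sum_mul]; ring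
    _ ≤ v i * H i i * v i + ∑ j ∈ univ \ {i}, v j * H i j * v i := by
        gcongr with j; exact off_diag j
    _ = (∑ j, v j * H i j) * v i := by
        rw [sum_mul, ← add_sum_erase _ _ (mem_univ i), sdiff_singleton_eq_erase]

theorem hasDerivAt_fderiv_apply_add_smul {E F : Type*} [NormedAddCommGroup E] [NormedSpace ℝ E]
    [NormedAddCommGroup F] [NormedSpace ℝ F] {U : E → F} {x v : E} {t : ℝ} (w : E)
    (hU : DifferentiableAt ℝ (fderiv ℝ U) (x + t • v)) :
    HasDerivAt (fun s : ℝ => fderiv ℝ U (x + s • v) w)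
      (fderiv ℝ (fderiv ℝ U) (x + t • v) v w) t := by
  have line : HasDerivAt (fun s : ℝ => x + s • v) v t := by
    simpa only [one_smul] using ((hasDerivAt_id' t).smul_const v).const_add x
  have hcomp := hU.hasFDerivAt.comp_hasDerivAt t line
  have happly := hcomp.clm_apply (hasDerivAt_const t w)
  rw [ContinuousLinearMap.map_zero, add_zero] at happly
  exact happly

theorem IsSymmSndFDerivAt.fderiv_fderiv_apply_eq_sum {ι F : Type*} [Fintype ι] [DecidableEq ι]
    [NormedAddCommGroup F] [NormedSpace ℝ F] {U : (ι → ℝ) → F} {y : ι → ℝ}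
    (hU : IsSymmSndFDerivAt ℝ U y) (v w : ι → ℝ) :
    fderiv ℝ (fderiv ℝ U) y v w = ∑ j, v j • iteratedFDeriv ℝ 2 U y ![w, Pi.single j 1] := by
  conv_lhs => rw [hU, ← univ_sum_single v]
  simp only [iteratedFDeriv_two_apply, map_sum, Matrix.cons_val_zero, Matrix.cons_val_one]
  refine sum_congr rfl fun j _ => ?_
  rw [← map_smul, ← Pi.single_smul', smul_eq_mul, mul_one]

/-- For a C² potential `U` on `ℝ^d` whose Hessian is diagonally dominant everywhere, and a
Zig-Zag velocity `v ∈ {−1,1}^d`, each map `t ↦ ∂_i U(x + t·v)·v_i` is non-decreasing, and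
hence the Zig-Zag rate `t ↦ ∑_i (∂_i U(x + t·v)·v_i)₊` is non-decreasing. -/
theorem zigzag_rate_monotone_of_diag_dominant (d : ℕ) (U : (Fin d → ℝ) → ℝ)
    (hU : ContDiff ℝ 2 U)
    (hdom : ∀ x : Fin d → ℝ, ∀ i : Fin d,
      ∑ j ∈ Finset.univ \ {i}, |iteratedFDeriv ℝ 2 U x ![Pi.single i 1, Pi.single j 1]|
        ≤ iteratedFDeriv ℝ 2 U x ![Pi.single i 1, Pi.single i 1])
    (x v : Fin d → ℝ) (hv : ∀ j, v j = 1 ∨ v j = -1) :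
    (∀ i : Fin d, Monotone fun t : ℝ => fderiv ℝ U (x + t • v) (Pi.single i 1) * v i) ∧
    Monotone fun t : ℝ => ∑ i, max (fderiv ℝ U (x + t • v) (Pi.single i 1) * v i) 0 := by
  have hsymm : ∀ y, IsSymmSndFDerivAt ℝ U y := fun y =>
    hU.contDiffAt.isSymmSndFDerivAt (by simp [minSmoothness_of_isRCLikeNormedField])
  have hU' : Differentiable ℝ (fderiv ℝ U) := (hU.fderiv_right le_rfl).differentiable one_ne_zero
  have hv_abs : ∀ j, |v j| = 1 := fun j => by rcases hv j with h | h <;> simp [h]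
  have hmono : ∀ i : Fin d, Monotone fun t : ℝ => fderiv ℝ U (x + t • v) (Pi.single i 1) * v i :=
    fun i => monotone_of_hasDerivAt_nonneg
      (fun t => (hasDerivAt_fderiv_apply_add_smul _ (hU' _)).mul_const (v i))
      (fun t => by
        rw [(hsymm _).fderiv_fderiv_apply_eq_sum]
        exact sum_mul_mul_nonneg_of_diag_dominant
          (fun i j => iteratedFDeriv ℝ 2 U _ ![Pi.single i 1, Pi.single j 1]) v i (hdom _ i)
          fun j => by rw [hv_abs, hv_abs])
  exact ⟨hmono, fun s t hst => sum_le_sum fun i _ => max_le_max_right 0 (hmono i hst)⟩
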